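/- Let F_n be the class of unweighted refined social poll instances on n agents whose social network graph has treewidth at most 1, with k candidates, in which the distinguished candidate c* is a possible winner. Then the canonical equivalence relation ∼_{F_n,0} on 0-boundaried instances (I₁ ∼ I₂ iff for all 0-boundaried instances H, I₁ ⊕ H ∈ F_n ⟺ I₂ ⊕ H ∈ F_n, where ⊕ is disjoint union) has at least ⌊n/k⌋^{k−1} equivalence classes. -/

import Mathlib

/-!
Edgeless instances in which no agent can be swayed are determined by their vote tallies: every
agent votes her top choice, so `I ⊕ H` lies in `F_n` iff the summed tally of `I` and `H` has
total `n` and is maximal at `c*`. Take for `L` the `⌊n/k⌋^(k-1)` tallies giving `c*` no vote and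
each other candidate fewer than `⌊n/k⌋`. For two distinct such tallies `u ≠ v`, an edgeless `H`
with tally `t` separates them: if their totals differ, put all `n - ∑ u` remaining agents on `c*`; if the
totals agree, pick `j` with `u j < v j` and `l` with `v l < u l`, and let `t` bring `c*` and `j`
to a common score in `u + t`, which `j` then exceeds in `v + t`.
-/

open scoped Classical
open Finset

/-- The set of neighbors of `x` (w.r.t. adjacency `adj`) that vote before `x`
in the voting order `ord` (smaller `ord`-value votes earlier). -/
noncomputable def prior {V : Type*} [Fintype V] (adj : V → V → Prop) (ord : V → ℕ) (x : V) :
    Finset V :=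
  Finset.univ.filter fun y => adj x y ∧ ord y < ord x

/-- Refined social poll model: `f` is the (unique) vote function arising from the
voting order `ord`: an agent `x` votes `c ∈ P x` if strictly more than half of her
previously-voting neighbors voted `c`, and otherwise votes her top choice `p1 x`. -/
def Consistent {V C : Type*} [Fintype V] (adj : V → V → Prop)
    (P : V → Finset C) (p1 : V → C) (ord : V → ℕ) (f : V → C) : Prop :=
  ∀ x : V,
    (∃ c ∈ P x,
        (2 * (((prior adj ord x).filter fun y => f y = c).card) > (prior adj ord x).card)
        ∧ f x = c)
    ∨ ((¬ ∃ c ∈ P x,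
          2 * (((prior adj ord x).filter fun y => f y = c).card) > (prior adj ord x).card)
        ∧ f x = p1 x)

/-- The score of candidate `c`: the number of agents voting for `c`. -/
noncomputable def score {V C : Type*} [Fintype V] (f : V → C) (c : C) : ℕ :=
  (Finset.univ.filter fun x => f x = c).card

/-- A (0-boundaried) unweighted refined social poll instance with candidate set
`Fin k`, where the distinguished candidate is `c* = 0`. -/
structure PollInst (k : ℕ) where
  V : Type
  [fin : Fintype V]
  adj : V → V → Prop
  P : V → Finset (Fin k)
  p1 : V → Fin k

attribute [instance] PollInst.fin

/-- The disjoint-union (`⊕`) of two 0-boundaried instances. -/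
def PollInst.disjUnion {k : ℕ} (I H : PollInst k) : PollInst k where
  V := I.V ⊕ H.V
  adj x y := match x, y with
    | .inl a, .inl b => I.adj a b
    | .inr a, .inr b => H.adj a b
    | _, _ => False
  P := Sum.elim I.P H.P
  p1 := Sum.elim I.p1 H.p1

/-- Membership in the class `F_n`: instances on `n` agents whose social network graph
has treewidth at most 1 (equivalently, is a forest) in which the distinguished
candidate `c* = 0` is a possible (co-)winner. -/
def InF {k : ℕ} (hk : 0 < k) (n : ℕ) (I : PollInst k) : Prop :=
  Fintype.card I.V = n ∧
  (SimpleGraph.fromRel I.adj).IsAcyclic ∧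
  ∃ (ord : I.V → ℕ) (f : I.V → Fin k),
    Function.Injective ord ∧ Consistent I.adj I.P I.p1 ord f ∧
    ∀ d : Fin k, score f d ≤ score f ⟨0, hk⟩

/-- The canonical equivalence relation `∼_{F_n,0}` on 0-boundaried instances. -/
def EqvF {k : ℕ} (hk : 0 < k) (n : ℕ) (I₁ I₂ : PollInst k) : Prop :=
  ∀ H : PollInst k, (InF hk n (I₁.disjUnion H) ↔ InF hk n (I₂.disjUnion H))

section Tally

variable {ι : Type*} [Fintype ι]

def IsWinningTally (n : ℕ) (c : ι) (u : ι → ℕ) : Prop :=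
  ∑ d, u d = n ∧ ∀ d, u d ≤ u c

def TallySeparates (n : ℕ) (c : ι) (u v : ι → ℕ) : Prop :=
  ∃ t, IsWinningTally n c (u + t) ∧ ¬ IsWinningTally n c (v + t)

variable {n m : ℕ} {c : ι} {u v : ι → ℕ}

lemma sum_add_card_mul_le (s : Finset ι) (hu : ∀ d ∉ s, u d ≤ m) :
    ∑ d, u d + #s * m ≤ ∑ d ∈ s, u d + Fintype.card ι * m := by
  have hcompl : ∑ d ∈ sᶜ, u d ≤ #sᶜ * m := by
    simpa using sum_le_card_nsmul sᶜ u m fun d hd => hu d (mem_compl.mp hd)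
  rw [← sum_add_sum_compl s u, ← card_add_card_compl s, add_mul]
  omega

lemma exists_lt_of_sum_eq_of_lt (hsum : ∑ d, u d = ∑ d, v d) {j : ι} (hj : u j < v j) :
    ∃ l, v l < u l := by
  by_contra! h
  exact (sum_lt_sum (fun l _ => h l) ⟨j, mem_univ j, hj⟩).ne hsum

lemma tallySeparates_of_sum_ne (hn : Fintype.card ι * m ≤ n) (huc : u c = 0)
    (hu : ∀ d ≠ c, u d < m) (hsum : ∑ d, u d ≠ ∑ d, v d) : TallySeparates n c u v := by
  have hbound := sum_add_card_mul_le {c} fun d hd => (hu d (by simpa using hd)).le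
  simp only [card_singleton, sum_singleton, huc, one_mul] at hbound
  refine ⟨Pi.single c (n - ∑ d, u d), ⟨?_, fun d => ?_⟩, fun hv => ?_⟩
  · simp only [Pi.add_apply, sum_add_distrib, sum_pi_single', mem_univ, if_true]
    omega
  · by_cases hdc : d = c
    · rw [hdc]
    · have hud := hu d hdc
      simp only [Pi.add_apply, Pi.single_eq_same, Pi.single_eq_of_ne hdc, huc]
      omega
  · have hv := hv.1
    simp only [Pi.add_apply, sum_add_distrib, sum_pi_single', mem_univ, if_true] at hv
    omega

lemma tallySeparates_of_lt_of_lt (hn : Fintype.card ι * m ≤ n) (huc : u c = 0)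
    (hvc : v c = 0) (hu : ∀ d ≠ c, u d < m) {j l : ι} (hj : u j < v j) (hl : v l < u l) :
    TallySeparates n c u v := by
  have hjc : j ≠ c := by rintro rfl; omega
  have hlc : l ≠ c := by rintro rfl; omega
  have hjl : j ≠ l := by rintro rfl; omega
  have hbound := sum_add_card_mul_le {c, j} fun d hd => (hu d (by simp_all)).le
  rw [card_pair hjc.symm, sum_pair hjc.symm, huc] at hbound
  have hul := hu l hlc
  have huj := hu j hjc
  have huj_le : u j ≤ ∑ d, u d := single_le_sum (fun _ _ => Nat.zero_le _) (mem_univ j)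
  -- `T` is the common final score of `c` and `j` in `u + t`; the parity bit `δ` goes to `l`.
  set R := n + u j - ∑ d, u d
  set T := R / 2
  set δ := R % 2
  have hT : m ≤ T := by omega
  refine ⟨Pi.single c T + Pi.single j (T - u j) + Pi.single l δ, ⟨?_, fun d => ?_⟩, fun hv => ?_⟩
  · simp only [Pi.add_apply, sum_add_distrib, sum_pi_single', mem_univ, if_true]
    omega
  · by_cases hdc : d = c
    · rw [hdc]
    · have hud := hu d hdc
      simp only [Pi.add_apply, Pi.single_apply, hdc, hjc.symm, hlc.symm, if_true, if_false, huc]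
      split_ifs <;> subst_vars <;> omega
  · have hv := hv.2 j
    simp only [Pi.add_apply, Pi.single_apply, hjc, hjl, hjc.symm, hlc.symm, if_true, if_false,
      hvc] at hv
    omega

lemma tallySeparates_or_tallySeparates (hn : Fintype.card ι * m ≤ n) (huc : u c = 0)
    (hvc : v c = 0) (hu : ∀ d ≠ c, u d < m) (hv : ∀ d ≠ c, v d < m) (huv : u ≠ v) :
    TallySeparates n c u v ∨ TallySeparates n c v u := by
  by_cases hsum : ∑ d, u d = ∑ d, v d
  · obtain ⟨j, hj⟩ := Function.ne_iff.mp huv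
    rcases hj.lt_or_gt with hj | hj
    · obtain ⟨l, hl⟩ := exists_lt_of_sum_eq_of_lt hsum hj
      exact .inl (tallySeparates_of_lt_of_lt hn huc hvc hu hj hl)
    · obtain ⟨l, hl⟩ := exists_lt_of_sum_eq_of_lt hsum.symm hj
      exact .inr (tallySeparates_of_lt_of_lt hn hvc huc hv hj hl)
  · exact .inl (tallySeparates_of_sum_ne hn huc hu hsum)

end Tally

lemma score_sigma_fst {ι : Type*} [Fintype ι] (t : ι → ℕ) (c : ι) :
    score (Sigma.fst : (d : ι) × Fin (t d) → ι) c = t c := by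
  simp only [score, card_filter, Fintype.sum_sigma]
  simp [apply_ite Finset.card]

lemma score_sum_elim {A B C : Type*} [Fintype A] [Fintype B] (f : A → C) (g : B → C) (c : C) :
    score (Sum.elim f g) c = score f c + score g c := by
  simp only [score, card_filter, Fintype.sum_sum_type, Sum.elim_inl, Sum.elim_inr]
  rfl

lemma consistent_iff_of_P_empty {V C : Type*} [Fintype V] {adj : V → V → Prop}
    {P : V → Finset C} {p1 : V → C} {ord : V → ℕ} {f : V → C} (hP : ∀ x, P x = ∅) :
    Consistent adj P p1 ord f ↔ f = p1 := by
  simp [Consistent, hP, funext_iff]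

lemma inF_iff_of_no_edges_of_P_empty {k : ℕ} (hk : 0 < k) (n : ℕ) (I : PollInst k)
    (hadj : ∀ x y, ¬ I.adj x y) (hP : ∀ x, I.P x = ∅) :
    InF hk n I ↔ Fintype.card I.V = n ∧ ∀ d, score I.p1 d ≤ score I.p1 ⟨0, hk⟩ := by
  have hbot : SimpleGraph.fromRel I.adj = ⊥ := by
    ext x y
    simp [hadj]
  simp only [InF, hbot, SimpleGraph.isAcyclic_bot, consistent_iff_of_P_empty hP, true_and]
  constructor
  · rintro ⟨hcard, ord, f, -, rfl, hwin⟩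
    exact ⟨hcard, hwin⟩
  · rintro ⟨hcard, hwin⟩
    exact ⟨hcard, fun x => Fintype.equivFin I.V x, I.p1,
      Fin.val_injective.comp (Fintype.equivFin I.V).injective, rfl, hwin⟩

namespace PollInst

def ofCounts (k : ℕ) (t : Fin k → ℕ) : PollInst k where
  V := (c : Fin k) × Fin (t c)
  adj _ _ := False
  P _ := ∅
  p1 := Sigma.fst

lemma inF_ofCounts_disjUnion_iff {k : ℕ} (hk : 0 < k) (n : ℕ) (s t : Fin k → ℕ) :
    InF hk n ((ofCounts k s).disjUnion (ofCounts k t)) ↔ IsWinningTally n ⟨0, hk⟩ (s + t) := by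
  have hscore (d) : score ((ofCounts k s).disjUnion (ofCounts k t)).p1 d = (s + t) d :=
    (score_sum_elim _ _ d).trans (congrArg₂ (· + ·) (score_sigma_fst s d) (score_sigma_fst t d))
  rw [inF_iff_of_no_edges_of_P_empty hk n _ (by rintro (x | x) (y | y) h <;> exact h)
    (by rintro (x | x) <;> rfl)]
  simp only [hscore]
  simp [IsWinningTally, disjUnion, ofCounts, sum_add_distrib]

lemma not_eqvF_ofCounts {k : ℕ} (hk : 0 < k) {n : ℕ} {u v : Fin k → ℕ}
    (h : TallySeparates n ⟨0, hk⟩ u v) : ¬ EqvF hk n (ofCounts k u) (ofCounts k v) := by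
  obtain ⟨t, hu, hv⟩ := h
  rw [← inF_ofCounts_disjUnion_iff] at hu hv
  exact fun heqv => hv ((heqv _).mp hu)

end PollInst

lemma EqvF.symm {k : ℕ} {hk : 0 < k} {n : ℕ} {I₁ I₂ : PollInst k} (h : EqvF hk n I₁ I₂) :
    EqvF hk n I₂ I₁ :=
  fun H => (h H).symm

lemma PollInst.not_eqvF_ofCounts_of_ne {k : ℕ} (hk : 0 < k) {n m : ℕ} (hn : k * m ≤ n)
    {u v : Fin k → ℕ} (huc : u ⟨0, hk⟩ = 0) (hvc : v ⟨0, hk⟩ = 0)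
    (hu : ∀ d ≠ ⟨0, hk⟩, u d < m) (hv : ∀ d ≠ ⟨0, hk⟩, v d < m) (huv : u ≠ v) :
    ¬ EqvF hk n (ofCounts k u) (ofCounts k v) := by
  rw [← Fintype.card_fin k] at hn
  rcases tallySeparates_or_tallySeparates hn huc hvc hu hv huv with h | h
  · exact not_eqvF_ofCounts hk h
  · exact fun heqv => not_eqvF_ofCounts hk h heqv.symm

/-- The equivalence relation `∼_{F_n,0}` has at least `⌊n/k⌋^(k-1)` equivalence
classes: there are `⌊n/k⌋^(k-1)` pairwise inequivalent 0-boundaried instances. -/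
theorem index_lower_bound (k n : ℕ) (hk : 0 < k) :
    ∃ L : Fin ((n / k) ^ (k - 1)) → PollInst k,
      ∀ i j, i ≠ j → ¬ EqvF hk n (L i) (L j) := by
  obtain ⟨k, rfl⟩ : ∃ k', k = k' + 1 := ⟨k - 1, by omega⟩
  set m := n / (k + 1)
  let tally (i : Fin (m ^ k)) : Fin (k + 1) → ℕ :=
    Fin.cons 0 fun l => finFunctionFinEquiv.symm i l
  have htally_inj : Function.Injective tally :=
    (Fin.cons_right_injective 0).comp
      ((Fin.val_injective.comp_left).comp finFunctionFinEquiv.symm.injective)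
  have htally_zero (i) : tally i ⟨0, hk⟩ = 0 := Fin.cons_zero _ _
  have htally_lt (i) : ∀ d ≠ ⟨0, hk⟩, tally i d < m := by
    refine Fin.cases (fun h => absurd rfl h) fun l _ => ?_
    simp only [tally, Fin.cons_succ]
    exact (finFunctionFinEquiv.symm i l).isLt
  refine ⟨fun i => PollInst.ofCounts (k + 1) (tally i), fun i j hij => ?_⟩
  exact PollInst.not_eqvF_ofCounts_of_ne hk (Nat.mul_div_le n (k + 1)) (htally_zero i)
    (htally_zero j) (htally_lt i) (htally_lt j) (htally_inj.ne hij)
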